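/- Let A = A₀ ⊕ A₁ be a supercommutative associative 𝕂-algebra and δ : A → A an odd derivation. Then the transposed-Poisson-type compatibility condition holds: for all homogeneous x, y, z ∈ A, 2 z β(x,y) = β(z x, y) + (-1)^{|z|(|x|+1)} β(x, z y), where β(x,y) = x δ(y) + (-1)^{(|x|+1)(|y|+1)} y δ(x). (This is the identity 2 z·{X,Y} = {z·X, Y} + (-1)^{|z||X|}{X, z·Y} for the vector fields X = x·δ, Y = y·δ of parities |X| = |x|+1, |Y| = |y|+1.) -/

import Mathlib

/-- Sign function: `sgn K p = (-1)^p` for a parity `p : ZMod 2`. -/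
def sgn (K : Type*) [Field K] : ZMod 2 → K := fun p => if p = 0 then 1 else -1

/-- `β(x,y) = x δ(y) + (-1)^{(|x|+1)(|y|+1)} y δ(x)` on homogeneous elements,
with the parities given as explicit arguments: the coefficient of the bracket
`{x·δ, y·δ}` of the vector fields `x·δ`, `y·δ`. -/
def betab {K : Type*} [Field K] {A : Type*} [NonUnitalRing A] [Module K A]
    (δ : A →ₗ[K] A) (x : A) (p : ZMod 2) (y : A) (q : ZMod 2) : A :=
  x * δ y + sgn K ((p + 1) * (q + 1)) • (y * δ x)

/-! Expanding the right-hand side with the Leibniz rule for `δ (z * _)` and commuting factors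
past one another leaves the three monomials `z (x δy)`, `z (y δx)` and `δz (y x)`. Their
coefficients are products of signs, so each coefficient identity is an identity of exponents in
`ZMod 2`: the first two monomials get twice the coefficient they have in `β(x, y)`, and the two
terms containing `δz` carry opposite signs. -/

theorem sgn_add {K : Type*} [Field K] (a b : ZMod 2) : sgn K (a + b) = sgn K a * sgn K b := by
  rcases (by decide : ∀ t : ZMod 2, t = 0 ∨ t = 1) a with rfl | rfl <;>
  rcases (by decide : ∀ t : ZMod 2, t = 0 ∨ t = 1) b with rfl | rfl <;>
  simp [sgn, show (1 : ZMod 2) + 1 = 0 from rfl]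

theorem sgn_add_one {K : Type*} [Field K] (a : ZMod 2) : sgn K (a + 1) = -sgn K a := by
  rw [sgn_add]
  simp [sgn]

theorem smul_mul_left_comm_of_mem {K : Type*} [Field K] {A : Type*} [NonUnitalRing A]
    [Module K A] [IsScalarTower K A A] {H : ZMod 2 → Submodule K A}
    (hcomm : ∀ (p q : ZMod 2) (x y : A), x ∈ H p → y ∈ H q → x * y = sgn K (p * q) • (y * x))
    {p r : ZMod 2} {x z : A} (hx : x ∈ H p) (hz : z ∈ H r) (w : A) :
    x * (z * w) = sgn K (p * r) • (z * (x * w)) := by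
  rw [← mul_assoc, hcomm p r x z hx hz, smul_mul_assoc, mul_assoc]

theorem stmt8_general
    {K : Type*} [Field K]
    {A : Type*} [NonUnitalRing A] [Module K A] [SMulCommClass K A A] [IsScalarTower K A A]
    -- ℤ₂-grading: `H p` is the subspace of homogeneous elements of parity `p`
    (H : ZMod 2 → Submodule K A)
    (hcomm : ∀ (p q : ZMod 2) (x y : A), x ∈ H p → y ∈ H q →
      x * y = sgn K (p * q) • (y * x))
    -- an odd derivation `δ`
    (δ : A →ₗ[K] A)
    (hδH : ∀ (p : ZMod 2) (x : A), x ∈ H p → δ x ∈ H (p + 1))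
    (hLeib : ∀ (p : ZMod 2) (x : A), x ∈ H p → ∀ y : A,
      δ (x * y) = δ x * y + sgn K p • (x * δ y)) :
    ∀ (p q r : ZMod 2) (x y z : A), x ∈ H p → y ∈ H q → z ∈ H r →
      (2 : K) • (z * betab δ x p y q) =
        betab δ (z * x) (r + p) y q + sgn K (r * (p + 1)) • betab δ x p (z * y) (r + q) := by
  intro p q r x y z hx hy hz
  have hδz := hδH r z hz
  have hu : sgn K (r * (p + 1)) * sgn K r * sgn K (p * r) = 1 := by
    rw [← sgn_add, ← sgn_add, show r * (p + 1) + r + p * r = 0 by grind]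
    rfl
  have hv₁ : sgn K ((r + p + 1) * (q + 1)) * sgn K r * sgn K (q * r) =
      sgn K ((p + 1) * (q + 1)) := by
    rw [← sgn_add, ← sgn_add]
    congr 1
    grind
  have hv₂ : sgn K (r * (p + 1)) * sgn K ((p + 1) * (r + q + 1)) = sgn K ((p + 1) * (q + 1)) := by
    rw [← sgn_add]
    congr 1
    grind
  have hw : sgn K (r * (p + 1)) * sgn K (p * (r + 1)) * sgn K (p * q) =
      -(sgn K ((r + p + 1) * (q + 1)) * sgn K (q * (r + 1))) := by
    rw [← sgn_add, ← sgn_add, ← sgn_add, ← sgn_add_one]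
    congr 1
    grind
  rw [betab, betab, betab, hLeib r z hz x, hLeib r z hz y]
  simp only [mul_add (R := A), smul_add, mul_smul_comm, mul_assoc]
  rw [smul_mul_left_comm_of_mem hcomm hy hz, smul_mul_left_comm_of_mem hcomm hx hz,
    smul_mul_left_comm_of_mem hcomm hy hδz, smul_mul_left_comm_of_mem hcomm hx hδz,
    hcomm p q x y hx hy, mul_smul_comm]
  linear_combination (norm := module)
    -(hu • (z * (x * δ y)) + (hv₁ + hv₂) • (z * (y * δ x)) + hw • (δ z * (y * x)))

theorem stmt8
    {K : Type*} [Field K] [CharZero K]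
    {A : Type*} [NonUnitalRing A] [Module K A] [SMulCommClass K A A] [IsScalarTower K A A]
    -- ℤ₂-grading: `H p` is the subspace of homogeneous elements of parity `p`
    (H : ZMod 2 → Submodule K A)
    (hgrade : DirectSum.IsInternal H)
    (hmulH : ∀ (p q : ZMod 2) (x y : A), x ∈ H p → y ∈ H q → x * y ∈ H (p + q))
    (hcomm : ∀ (p q : ZMod 2) (x y : A), x ∈ H p → y ∈ H q →
      x * y = sgn K (p * q) • (y * x))
    -- an odd derivation `δ`
    (δ : A →ₗ[K] A)
    (hδH : ∀ (p : ZMod 2) (x : A), x ∈ H p → δ x ∈ H (p + 1))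
    (hLeib : ∀ (p : ZMod 2) (x : A), x ∈ H p → ∀ y : A,
      δ (x * y) = δ x * y + sgn K p • (x * δ y)) :
    ∀ (p q r : ZMod 2) (x y z : A), x ∈ H p → y ∈ H q → z ∈ H r →
      (2 : K) • (z * betab δ x p y q) =
        betab δ (z * x) (r + p) y q + sgn K (r * (p + 1)) • betab δ x p (z * y) (r + q) :=
  stmt8_general H hcomm δ hδH hLeib
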